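/- If (Y,S) is totally minimal and M ⊆ Y×X is a minimal subset of a product system satisfying (S^n × id_X)M = M for some n ≠ 0 and M projects onto X, then M = Y×X. -/

import Mathlib

/-- The group of self-homeomorphisms under composition, so that `T ^ n` (`n : ℤ`)
denotes the `n`-th iterate of `T`. -/
instance Homeomorph.instGroupOld {X : Type*} [TopologicalSpace X] : Group (X ≃ₜ X) where
  mul f g := g.trans f
  one := Homeomorph.refl X
  inv := Homeomorph.symm
  mul_assoc _ _ _ := Homeomorph.ext fun _ => rfl
  one_mul _ := Homeomorph.ext fun _ => rfl
  mul_one _ := Homeomorph.ext fun _ => rfl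
  inv_mul_cancel f := Homeomorph.ext fun x => f.symm_apply_apply x

/-- The orbit closure of a point under a homeomorphism. -/
def orbitCl {X : Type*} [TopologicalSpace X] (T : X ≃ₜ X) (p : X) : Set X :=
  closure {q | ∃ n : ℤ, (T ^ n) p = q}

/-- A (minimal) dynamical system: every orbit closure is everything. -/
def IsMinimalSys {X : Type*} [TopologicalSpace X] (T : X ≃ₜ X) : Prop :=
  ∀ x : X, orbitCl T x = Set.univ

/-- Totally minimal: every nonzero power is minimal. -/
def IsTotallyMinimal {X : Type*} [TopologicalSpace X] (T : X ≃ₜ X) : Prop :=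
  ∀ n : ℤ, n ≠ 0 → IsMinimalSys (T ^ n)

/-- The graph Γ_n = {(T^n x, x) : x ∈ X}. -/
def graphPow {X : Type*} [TopologicalSpace X] (T : X ≃ₜ X) (n : ℤ) : Set (X × X) :=
  {p | ∃ x : X, p = ((T ^ n) x, x)}

/-- POD: totally minimal and for distinct u, v some graph Γ_n (n ≠ 0) lies in the
orbit closure of (u, v) under T × T. -/
def IsPOD {X : Type*} [TopologicalSpace X] (T : X ≃ₜ X) : Prop :=
  IsMinimalSys T ∧ IsTotallyMinimal T ∧
    ∀ u v : X, u ≠ v → ∃ n : ℤ, n ≠ 0 ∧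
      graphPow T n ⊆ orbitCl (T.prodCongr T) (u, v)

/-- Doubly minimal: minimal, and every orbit closure of T × T is either everything
or a graph Γ_m. -/
def IsDoublyMinimal {X : Type*} [TopologicalSpace X] (T : X ≃ₜ X) : Prop :=
  IsMinimalSys T ∧
    ∀ p : X × X, orbitCl (T.prodCongr T) p = Set.univ ∨
      ∃ m : ℤ, orbitCl (T.prodCongr T) p = graphPow T m

/-- A factor map: continuous equivariant surjection. -/
def IsFactorMap {X Y : Type*} [TopologicalSpace X] [TopologicalSpace Y]
    (T : X ≃ₜ X) (S : Y ≃ₜ Y) (π : X → Y) : Prop :=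
  Continuous π ∧ Function.Surjective π ∧ ∀ x, π (T x) = S (π x)

/-- Disjointness: the only closed invariant subset of the product projecting
onto both coordinates is the whole product. -/
def SysDisjoint {X Y : Type*} [TopologicalSpace X] [TopologicalSpace Y]
    (T : X ≃ₜ X) (S : Y ≃ₜ Y) : Prop :=
  ∀ M : Set (X × Y), IsClosed M → (T.prodCongr S) '' M = M →
    Prod.fst '' M = Set.univ → Prod.snd '' M = Set.univ → M = Set.univ

/-- A recurrent point: in the closure of its forward orbit with positive times. -/
def IsRecurrentPt {X : Type*} [TopologicalSpace X] (T : X ≃ₜ X) (x : X) : Prop :=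
  x ∈ closure {q | ∃ n : ℕ, 1 ≤ n ∧ (T ^ n) x = q}

/-- A proximal pair: the orbits come arbitrarily close together. -/
def IsProximal {X : Type*} [PseudoMetricSpace X] (T : X ≃ₜ X) (x x' : X) : Prop :=
  ∀ ε > 0, ∃ n : ℤ, dist ((T ^ n) x) ((T ^ n) x') < ε

/-- A distal point: proximal only to itself. -/
def IsDistalPt {X : Type*} [PseudoMetricSpace X] (T : X ≃ₜ X) (x : X) : Prop :=
  ∀ x', IsProximal T x x' → x' = x

/-- A minimal subset: nonempty, closed, invariant, with all orbits dense in it. -/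
def IsMinimalSubset {X : Type*} [TopologicalSpace X] (T : X ≃ₜ X) (M : Set X) : Prop :=
  M.Nonempty ∧ IsClosed M ∧ (T : X ≃ₜ X) '' M = M ∧
    ∀ p ∈ M, M ⊆ closure {q | ∃ n : ℤ, (T ^ n) p = q}

/-- Topological transitivity. -/
def IsTopTransitive {X : Type*} [TopologicalSpace X] (T : X ≃ₜ X) : Prop :=
  ∀ U V : Set X, IsOpen U → IsOpen V → U.Nonempty → V.Nonempty →
    ∃ n : ℤ, ((T ^ n) '' U ∩ V).Nonempty

/-- Weak mixing: the product system is topologically transitive. -/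
def IsWeaklyMixing {X : Type*} [TopologicalSpace X] (T : X ≃ₜ X) : Prop :=
  IsTopTransitive (T.prodCongr T)

/-! The fibre `{y | (y, x) ∈ M}` over a point `x` is closed and invariant under `S ^ n`, and it
is nonempty because `M` projects onto `X`. Since `S ^ n` is minimal, a nonempty closed invariant
set contains a dense orbit, so every fibre is all of `Y`. -/

namespace Homeomorph

variable {Z : Type*} [TopologicalSpace Z]

theorem image_zpow_eq_of_image_eq {g : Z ≃ₜ Z} {A : Set Z} (h : g '' A = A) (k : ℤ) :
    (g ^ k) '' A = A := by
  have h_inv : (g⁻¹ : Z ≃ₜ Z) '' A = A := by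
    change g.symm '' A = A
    rw [image_symm, ← h, preimage_image, h]
  induction k using Int.induction_on with
  | zero => exact Set.image_id A
  | succ k ih =>
    rw [zpow_add_one]
    change (g ^ (k : ℤ)) ∘ g '' A = A
    rw [Set.image_comp, h, ih]
  | pred k ih =>
    rw [zpow_sub_one]
    change (g ^ (-(k : ℤ))) ∘ (g⁻¹ : Z ≃ₜ Z) '' A = A
    rw [Set.image_comp, h_inv, ih]

theorem image_prodCongr_refl_fiber_eq {X Y : Type*} [TopologicalSpace X] [TopologicalSpace Y]
    {f : Y ≃ₜ Y} {M : Set (Y × X)} (h : f.prodCongr (Homeomorph.refl X) '' M = M) (x : X) :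
    f '' {y | (y, x) ∈ M} = {y | (y, x) ∈ M} := by
  ext y
  constructor
  · rintro ⟨y', hy', rfl⟩
    show (f y', x) ∈ M
    rw [← h]
    exact ⟨(y', x), hy', rfl⟩
  · intro hy
    change (y, x) ∈ M at hy
    rw [← h] at hy
    obtain ⟨⟨y', x'⟩, hy', hxy⟩ := hy
    obtain ⟨rfl, rfl⟩ := Prod.ext_iff.mp hxy
    exact ⟨y', hy', rfl⟩

end Homeomorph

theorem IsMinimalSys.eq_univ_of_isClosed_of_image_eq {Z : Type*} [TopologicalSpace Z]
    {g : Z ≃ₜ Z} (hg : IsMinimalSys g) {A : Set Z} (hA : IsClosed A) (h : g '' A = A)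
    (hne : A.Nonempty) : A = Set.univ := by
  obtain ⟨z, hz⟩ := hne
  have h_orbit : {q | ∃ k : ℤ, (g ^ k) z = q} ⊆ A := by
    rintro _ ⟨k, rfl⟩
    rw [← Homeomorph.image_zpow_eq_of_image_eq h k]
    exact Set.mem_image_of_mem _ hz
  rw [← Set.univ_subset_iff, ← hg z]
  exact closure_minimal h_orbit hA

theorem totallyMinimal_invariant_minimalSubset_eq_univ_general {X Y : Type*} [MetricSpace X] [MetricSpace Y]
    (T : X ≃ₜ X) (S : Y ≃ₜ Y) (hS : IsTotallyMinimal S)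
    (M : Set (Y × X)) (hM : IsMinimalSubset (S.prodCongr T) M)
    (n : ℤ) (hn : n ≠ 0)
    (hinv : ((S ^ n).prodCongr (Homeomorph.refl X)) '' M = M)
    (hproj : Prod.snd '' M = Set.univ) :
    M = Set.univ := by
  rw [Set.eq_univ_iff_forall]
  rintro ⟨y, x⟩
  obtain ⟨⟨y₀, x⟩, hy₀, rfl⟩ : x ∈ Prod.snd '' M := hproj ▸ Set.mem_univ x
  have h_fiber : {y | (y, x) ∈ M} = Set.univ :=
    (hS n hn).eq_univ_of_isClosed_of_image_eq (hM.2.1.preimage (Continuous.prodMk_left x))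
      (Homeomorph.image_prodCongr_refl_fiber_eq hinv x) ⟨y₀, hy₀⟩
  exact Set.eq_univ_iff_forall.mp h_fiber y

theorem totallyMinimal_invariant_minimalSubset_eq_univ {X Y : Type*} [MetricSpace X] [CompactSpace X] [MetricSpace Y] [CompactSpace Y]
    (T : X ≃ₜ X) (S : Y ≃ₜ Y) (hS : IsTotallyMinimal S)
    (M : Set (Y × X)) (hM : IsMinimalSubset (S.prodCongr T) M)
    (n : ℤ) (hn : n ≠ 0)
    (hinv : ((S ^ n).prodCongr (Homeomorph.refl X)) '' M = M)
    (hproj : Prod.snd '' M = Set.univ) :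
    M = Set.univ :=
  totallyMinimal_invariant_minimalSubset_eq_univ_general T S hS M hM n hn hinv hproj
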